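/- Let n ≥ 1 with n ≡ 0 (mod 4) or n ≡ 3 (mod 4). Then M(n) equals S(n), where S(n) is the number of sign choices ε : {1,...,n} → {−1, +1} such that Σ_{i=1}^{n} ε(i)·i = 0. -/

import Mathlib

/-!
Proctor's linear-algebra proof that the subset-sum numbers are unimodal. Write `N = n(n+1)/2`.
On functions on finsets, `raise n` pushes a subset of `{1,…,n}` to the subsets obtained by adding
`1` or by replacing some `k` by `k + 1`, and `lower n` undoes these moves with suitable weights.
The commutator `raise n * lower n - lower n * raise n` acts on subsets of sum `m` as the scalar
`2m - N`, so the usual `sl₂` computation shows that `raise n` is injective from sum `K` to sum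
`K + 1` whenever `2K < N`. Hence the number of subsets of sum `K` increases up to `N / 2`; since
complementation in `{1,…,n}` exchanges the sums `K` and `N - K`, the maximum is attained at
`⌊N / 2⌋`. When `4 ∣ n(n+1)`, the positions of the `+1` signs in a sign choice with zero signed
sum form a subset of sum exactly `N / 2`.
-/

/-- The number of subsets of `{1,…,n}` whose elements sum to `i`. -/
def levelCard (n i : ℕ) : ℕ :=
  (((Finset.Icc 1 n).powerset).filter (fun s => s.sum id = i)).card

/-- `M n`: the maximum over `K ∈ ℕ` of the number of subsets of `{1,…,n}`
whose elements sum to `K`. -/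
noncomputable def M (n : ℕ) : ℕ := ⨆ K : ℕ, levelCard n K

/-- `S n`: the number of sign choices `ε : {1,…,n} → {−1,+1}` (here `ℤˣ`, the
units of `ℤ`, i.e. `{−1, +1}`, with position `i : Fin n` standing for the
integer `i + 1`) whose signed sum `Σ_{i=1}^{n} ε(i)·i` is zero. -/
def S (n : ℕ) : ℕ :=
  Fintype.card {ε : Fin n → ℤˣ // ∑ i : Fin n, (ε i : ℤ) * ((i : ℕ) + 1) = 0}

open Finset

namespace SubsetSum

section Sl2

variable {𝕜 V : Type*} [Field 𝕜] [AddCommGroup V] [Module 𝕜 V] (e f : Module.End 𝕜 V)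
  {μ : 𝕜} {v : V}

lemma apply_pow_succ_apply_of_commutator (he : e v = 0)
    (hcomm : ∀ j : ℕ, (e * f - f * e) ((f ^ j) v) = (μ - 2 * j) • (f ^ j) v) (j : ℕ) :
    e ((f ^ (j + 1)) v) = ((j + 1) * (μ - j)) • (f ^ j) v := by
  induction j with
  | zero => simpa [he] using hcomm 0
  | succ j ih =>
    have h := hcomm (j + 1)
    rw [LinearMap.sub_apply, Module.End.mul_apply, Module.End.mul_apply, sub_eq_iff_eq_add] at h
    rw [pow_succ', Module.End.mul_apply, h, ih, map_smul, ← Module.End.mul_apply, ← pow_succ',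
      ← add_smul]
    push_cast
    congr 1
    ring

lemma eq_zero_of_pow_apply_eq_zero [LinearOrder 𝕜] [IsStrictOrderedRing 𝕜] (hμ : μ < 0)
    (he : e v = 0) (hcomm : ∀ j : ℕ, (e * f - f * e) ((f ^ j) v) = (μ - 2 * j) • (f ^ j) v)
    {m : ℕ} (hm : (f ^ m) v = 0) : v = 0 := by
  induction m with
  | zero => simpa using hm
  | succ m ih =>
    have h := apply_pow_succ_apply_of_commutator e f he hcomm m
    rw [hm, map_zero, eq_comm] at h
    exact ih ((smul_eq_zero.1 h).resolve_left <|
      mul_ne_zero (by positivity) (sub_neg.2 (hμ.trans_le m.cast_nonneg)).ne)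

end Sl2

/-! ### Counting sign choices -/

lemma sum_units_mul_eq {ι : Type*} [Fintype ι] (ε : ι → ℤˣ) (w : ι → ℤ) :
    ∑ i, (ε i : ℤ) * w i = 2 * ∑ i with ε i = 1, w i - ∑ i, w i := by
  have h : ∀ i, (ε i : ℤ) * w i = 2 * (if ε i = 1 then w i else 0) - w i := fun i => by
    rcases Int.units_eq_one_or (ε i) with h | h <;> simp [h]; ring
  rw [sum_congr rfl fun i _ => h i, sum_sub_distrib, ← mul_sum, sum_filter]

lemma card_units_sum_mul_eq_zero {ι : Type*} [Fintype ι] [DecidableEq ι] (w : ι → ℤ) :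
    Fintype.card {ε : ι → ℤˣ // ∑ i, (ε i : ℤ) * w i = 0} =
      #{t : Finset ι | 2 * ∑ i ∈ t, w i = ∑ i, w i} := by
  have hsigns : ∀ t : Finset ι, ({i | (if i ∈ t then 1 else -1 : ℤˣ) = 1} : Finset ι) = t :=
    fun t => by ext i; by_cases h : i ∈ t <;> simp [h]
  rw [Fintype.card_subtype]
  refine card_nbij' (fun ε => ({i | ε i = 1} : Finset ι)) (fun t i => if i ∈ t then 1 else -1)
    (fun ε hε => ?_) (fun t ht => ?_) (fun ε _ => ?_) (fun t _ => hsigns t)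
  · simp only [coe_filter, mem_univ, true_and, Set.mem_ofPred_eq, sum_units_mul_eq] at hε ⊢
    omega
  · simp only [coe_filter, mem_univ, true_and, Set.mem_ofPred_eq, sum_units_mul_eq,
      hsigns] at ht ⊢
    omega
  · funext i
    rcases Int.units_eq_one_or (ε i) with h | h <;> simp [h]

lemma map_univ_fin_eq_Icc (n : ℕ) :
    (univ : Finset (Fin n)).map (Fin.valEmbedding.trans (addRightEmbedding 1)) = Icc 1 n := by
  ext x
  simp only [mem_map, mem_univ, true_and, Function.Embedding.trans_apply, Fin.valEmbedding_apply,
    addRightEmbedding_apply, mem_Icc]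
  exact ⟨fun ⟨i, hi⟩ => by omega, fun h => ⟨⟨x - 1, by omega⟩, by simp; omega⟩⟩

lemma levelCard_eq_card_fin (n K : ℕ) :
    levelCard n K = #{t : Finset (Fin n) | ∑ i ∈ t, ((i : ℕ) + 1) = K} := by
  set e := Fin.valEmbedding.trans (addRightEmbedding 1) (α := Fin n)
  symm
  apply card_nbij (fun t => t.map e)
  · intro t ht
    simp only [coe_filter, Set.mem_ofPred_eq, mem_univ, true_and] at ht ⊢
    refine ⟨mem_powerset.2 ?_, ?_⟩
    · rw [← map_univ_fin_eq_Icc]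
      exact map_subset_map.2 (subset_univ t)
    · rw [sum_map]
      exact ht
  · exact fun t _ u _ h => map_injective e h
  · intro s hs
    simp only [coe_filter, Set.mem_ofPred_eq, mem_powerset] at hs
    obtain ⟨u, -, rfl⟩ := subset_map_iff.1 (map_univ_fin_eq_Icc n ▸ hs.1)
    refine ⟨u, ?_, rfl⟩
    simpa [sum_map, e] using hs.2

lemma S_eq_levelCard {n K : ℕ} (hK : 2 * K = ∑ i ∈ Icc 1 n, i) : S n = levelCard n K := by
  have htot : ∑ i : Fin n, ((i : ℕ) + 1) = ∑ i ∈ Icc 1 n, i := by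
    rw [← map_univ_fin_eq_Icc, sum_map]
    rfl
  have hK' : ∑ i : Fin n, (((i : ℕ) : ℤ) + 1) = 2 * K := by
    exact_mod_cast (hK.trans htot.symm).symm
  rw [S, card_units_sum_mul_eq_zero, levelCard_eq_card_fin]
  congr 1
  refine filter_congr fun t _ => ?_
  have : ∑ i ∈ t, (((i : ℕ) : ℤ) + 1) = ((∑ i ∈ t, ((i : ℕ) + 1) : ℕ) : ℤ) := by
    push_cast
    rfl
  omega

/-! ### Level sets and their symmetry -/

def levelSet (n K : ℕ) : Finset (Finset ℕ) := {s ∈ (Icc 1 n).powerset | s.sum id = K}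

lemma mem_levelSet {n K : ℕ} {s : Finset ℕ} :
    s ∈ levelSet n K ↔ s ⊆ Icc 1 n ∧ ∑ i ∈ s, i = K := by
  simp only [levelSet, mem_filter, mem_powerset]
  rfl

lemma levelCard_eq_card_levelSet (n K : ℕ) : levelCard n K = #(levelSet n K) := rfl

lemma sum_Icc_id_mul_two (n : ℕ) : (∑ i ∈ Icc 1 n, i) * 2 = n * (n + 1) := by
  induction n with
  | zero => rfl
  | succ n ih =>
    rw [sum_Icc_succ_top (by omega), add_mul, ih]
    ring

lemma sdiff_mem_levelSet {n K K' : ℕ} (h : K + K' = ∑ i ∈ Icc 1 n, i) {s : Finset ℕ}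
    (hs : s ∈ levelSet n K) : Icc 1 n \ s ∈ levelSet n K' := by
  obtain ⟨hsub, hsum⟩ := mem_levelSet.1 hs
  have := sum_sdiff (f := fun i => i) hsub
  exact mem_levelSet.2 ⟨sdiff_subset, by omega⟩

lemma levelCard_eq_levelCard_of_add_eq {n K K' : ℕ} (h : K + K' = ∑ i ∈ Icc 1 n, i) :
    levelCard n K = levelCard n K' :=
  card_nbij' (Icc 1 n \ ·) (Icc 1 n \ ·) (fun _ hs => sdiff_mem_levelSet h hs)
    (fun _ hs => sdiff_mem_levelSet ((add_comm _ _).trans h) hs)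
    (fun _ hs => Finset.sdiff_sdiff_eq_self (mem_levelSet.1 hs).1)
    (fun _ hs => Finset.sdiff_sdiff_eq_self (mem_levelSet.1 hs).1)

lemma levelCard_eq_zero_of_lt {n K : ℕ} (h : ∑ i ∈ Icc 1 n, i < K) : levelCard n K = 0 := by
  refine card_eq_zero.2 (eq_empty_of_forall_notMem fun s hs => ?_)
  obtain ⟨hsub, hsum⟩ := mem_levelSet.1 hs
  have := sum_le_sum_of_subset (f := fun i => i) hsub
  omega

/-! ### Proctor's operators -/

/- The operators act on coefficient functions of formal combinations of finsets: `insertOp a`,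
`eraseOp a` and `moveOp a b` are the linear extensions of `t ↦ insert a t` (for `a ∉ t`),
`t ↦ t.erase a` (for `a ∈ t`) and of replacing `a ∈ t` by `b ∉ t`. -/

def insertOp (a : ℕ) : Module.End ℚ (Finset ℕ → ℚ) where
  toFun f s := if a ∈ s then f (s.erase a) else 0
  map_add' f g := by ext s; by_cases h : a ∈ s <;> simp [h]
  map_smul' c f := by ext s; by_cases h : a ∈ s <;> simp [h]

def eraseOp (a : ℕ) : Module.End ℚ (Finset ℕ → ℚ) where
  toFun f s := if a ∉ s then f (insert a s) else 0
  map_add' f g := by ext s; by_cases h : a ∈ s <;> simp [h]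
  map_smul' c f := by ext s; by_cases h : a ∈ s <;> simp [h]

def moveOp (a b : ℕ) : Module.End ℚ (Finset ℕ → ℚ) where
  toFun f s := if b ∈ s ∧ a ∉ s then f (insert a (s.erase b)) else 0
  map_add' f g := by ext s; simp only [Pi.add_apply]; split_ifs <;> simp
  map_smul' c f := by ext s; simp only [Pi.smul_apply]; split_ifs <;> simp

@[simp] lemma insertOp_apply (a : ℕ) (f : Finset ℕ → ℚ) (s : Finset ℕ) :
    insertOp a f s = if a ∈ s then f (s.erase a) else 0 := rfl

@[simp] lemma eraseOp_apply (a : ℕ) (f : Finset ℕ → ℚ) (s : Finset ℕ) :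
    eraseOp a f s = if a ∉ s then f (insert a s) else 0 := rfl

@[simp] lemma moveOp_apply (a b : ℕ) (f : Finset ℕ → ℚ) (s : Finset ℕ) :
    moveOp a b f s = if b ∈ s ∧ a ∉ s then f (insert a (s.erase b)) else 0 := rfl

lemma insertOp_mul_eraseOp_sub (a : ℕ) :
    insertOp a * eraseOp a - eraseOp a * insertOp a =
      LinearMap.mulLeft ℚ (fun s => if a ∈ s then 1 else -1) := by
  ext f s
  by_cases h : a ∈ s <;> simp [h]

lemma moveOp_mul_moveOp_swap_sub {a b : ℕ} (hab : a ≠ b) :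
    moveOp a b * moveOp b a - moveOp b a * moveOp a b =
      LinearMap.mulLeft ℚ (fun s => (if b ∈ s then 1 else 0) - if a ∈ s then 1 else 0) := by
  ext f s
  by_cases ha : a ∈ s <;> by_cases hb : b ∈ s <;> simp [ha, hb, hab, hab.symm]

lemma commute_moveOp_moveOp {a b c d : ℕ} (hab : a ≠ b) (hcd : c ≠ d) (had : a ≠ d)
    (hbc : b ≠ c) : Commute (moveOp a b) (moveOp c d) := by
  ext f s
  simp only [Module.End.mul_apply, moveOp_apply]
  by_cases hac : a = c
  · subst hac
    by_cases hb : b ∈ s <;> by_cases hd : d ∈ s <;> by_cases ha : a ∈ s <;>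
      simp [ha, hb, hd, hab, hcd, hbc]
  by_cases hbd : b = d
  · subst hbd
    by_cases hb : b ∈ s <;> by_cases hc : c ∈ s <;> by_cases ha : a ∈ s <;>
      simp [ha, hb, hc, hab.symm, hbc, hcd]
  by_cases ha : a ∈ s <;> by_cases hb : b ∈ s <;> by_cases hc : c ∈ s <;> by_cases hd : d ∈ s <;>
    simp [ha, hb, hc, hd, had, hbc, hac, hbd, had.symm, hbc.symm, Ne.symm hac, Ne.symm hbd]
  congr 1
  ext x
  simp only [mem_insert, mem_erase]
  grind

lemma commute_insertOp_moveOp {a c d : ℕ} (hcd : c ≠ d) (hac : a ≠ c) :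
    Commute (insertOp a) (moveOp c d) := by
  ext f s
  simp only [Module.End.mul_apply, insertOp_apply, moveOp_apply]
  by_cases had : a = d
  · subst had
    by_cases ha : a ∈ s <;> by_cases hc : c ∈ s <;> simp [ha, hc, hcd.symm]
  by_cases ha : a ∈ s <;> by_cases hc : c ∈ s <;> by_cases hd : d ∈ s <;>
    simp [ha, hc, hd, hac, had, Ne.symm hac, Ne.symm had]
  congr 1
  ext x
  simp only [mem_insert, mem_erase]
  grind

lemma commute_moveOp_eraseOp {a c d : ℕ} (hcd : c ≠ d) (had : a ≠ d) :
    Commute (moveOp c d) (eraseOp a) := by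
  ext f s
  simp only [Module.End.mul_apply, eraseOp_apply, moveOp_apply]
  by_cases hac : a = c
  · subst hac
    by_cases ha : a ∈ s <;> by_cases hd : d ∈ s <;> simp [ha, hd, hcd]
  by_cases ha : a ∈ s <;> by_cases hc : c ∈ s <;> by_cases hd : d ∈ s <;>
    simp [ha, hc, hd, hac, had, Ne.symm hac, Ne.symm had]
  congr 1
  ext x
  simp only [mem_insert, mem_erase]
  grind

lemma sum_moveOp_mul_sum_moveOp_sub (n : ℕ) (c : ℕ → ℚ) :
    (∑ j ∈ Ico 1 n, moveOp j (j + 1)) * (∑ k ∈ Ico 1 n, c k • moveOp (k + 1) k) -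
        (∑ k ∈ Ico 1 n, c k • moveOp (k + 1) k) * ∑ j ∈ Ico 1 n, moveOp j (j + 1) =
      ∑ k ∈ Ico 1 n, c k •
        LinearMap.mulLeft ℚ (fun s => (if k + 1 ∈ s then 1 else 0) - if k ∈ s then 1 else 0) := by
  rw [sum_mul_sum, sum_mul_sum, sum_comm (s := Ico 1 n) (t := Ico 1 n)
    (f := fun k j => (c k • moveOp (k + 1) k) * moveOp j (j + 1)), ← sum_sub_distrib]
  refine sum_congr rfl fun j hj => ?_
  rw [← sum_sub_distrib, sum_eq_single j]
  · rw [smul_mul_assoc, mul_smul_comm, ← moveOp_mul_moveOp_swap_sub (by omega), smul_sub]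
  · intro k _ hkj
    rw [smul_mul_assoc, mul_smul_comm,
      (commute_moveOp_moveOp (by omega) (by omega) (by omega) (by omega)).eq, sub_self]
  · exact fun h => absurd hj h

def raise (n : ℕ) : Module.End ℚ (Finset ℕ → ℚ) := insertOp 1 + ∑ k ∈ Ico 1 n, moveOp k (k + 1)

-- Proctor's weights: they make the commutator of `raise n` and `lower n` diagonal.
def lower (n : ℕ) : Module.End ℚ (Finset ℕ → ℚ) :=
  (n * (n + 1) / 2 : ℚ) • eraseOp 1 +
    ∑ k ∈ Ico 1 n, (n * (n + 1) - k * (k + 1) : ℚ) • moveOp (k + 1) k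

def weight (n : ℕ) (s : Finset ℕ) : ℚ :=
  n * (n + 1) / 2 * (if 1 ∈ s then 1 else -1) + ∑ k ∈ Ico 1 n,
    (n * (n + 1) - k * (k + 1) : ℚ) * ((if k + 1 ∈ s then 1 else 0) - if k ∈ s then 1 else 0)

lemma raise_mul_lower_sub (n : ℕ) :
    raise n * lower n - lower n * raise n = LinearMap.mulLeft ℚ (weight n) := by
  set c : ℕ → ℚ := fun k => n * (n + 1) - k * (k + 1)
  set A := ∑ j ∈ Ico 1 n, moveOp j (j + 1)
  set B := ∑ k ∈ Ico 1 n, c k • moveOp (k + 1) k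
  set N : ℚ := n * (n + 1) / 2
  have hIB : Commute (insertOp 1) B := Commute.sum_right _ _ _ fun k hk =>
    (commute_insertOp_moveOp (by omega) (by simp at hk; omega)).smul_right _
  have hAE : Commute A (eraseOp 1) := Commute.sum_left _ _ _ fun k hk =>
    commute_moveOp_eraseOp (by omega) (by simp at hk; omega)
  calc raise n * lower n - lower n * raise n
      = N • (insertOp 1 * eraseOp 1 - eraseOp 1 * insertOp 1) + (insertOp 1 * B - B * insertOp 1)
        + N • (A * eraseOp 1 - eraseOp 1 * A) + (A * B - B * A) := by
        rw [show raise n = insertOp 1 + A from rfl, show lower n = N • eraseOp 1 + B from rfl]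
        simp only [add_mul, mul_add, smul_mul_assoc, mul_smul_comm, smul_sub, smul_add]
        abel
    _ = LinearMap.mulLeft ℚ (weight n) := by
        rw [insertOp_mul_eraseOp_sub, hIB.eq, hAE.eq, sub_self, sub_self, smul_zero, add_zero,
          add_zero, sum_moveOp_mul_sum_moveOp_sub]
        ext f s
        simp [weight, N, c, LinearMap.sum_apply, Finset.sum_apply, Finset.sum_mul, add_mul,
          mul_assoc]

lemma sum_range_mul_sub_eq {R : Type*} [CommRing R] (χ : ℕ → R) (n : ℕ) :
    ∑ k ∈ range n, ((n * (n + 1) - k * (k + 1) : R) * (χ (k + 1) - χ k)) =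
      ∑ k ∈ range n, 2 * (k + 1 : R) * χ (k + 1) - n * (n + 1) * χ 0 := by
  induction n with
  | zero => simp
  | succ n ih =>
    have hsplit : ∀ k : ℕ,
        (((n + 1 : ℕ) : R) * ((n + 1 : ℕ) + 1) - k * (k + 1)) * (χ (k + 1) - χ k) =
          (n * (n + 1) - k * (k + 1) : R) * (χ (k + 1) - χ k) +
            2 * (n + 1) * (χ (k + 1) - χ k) := by
      intro k
      push_cast
      ring
    rw [sum_congr rfl fun k _ => hsplit k, sum_add_distrib, ← mul_sum, sum_range_sub,
      sum_range_succ (fun k => (n * (n + 1) - k * (k + 1) : R) * (χ (k + 1) - χ k)), ih,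
      sum_range_succ (fun k => 2 * (k + 1 : R) * χ (k + 1))]
    push_cast
    ring

lemma weight_eq {n : ℕ} {s : Finset ℕ} (hs : s ⊆ Icc 1 n) :
    weight n s = 2 * ∑ i ∈ s, (i : ℚ) - n * (n + 1) / 2 := by
  rcases Nat.eq_zero_or_pos n with rfl | hn
  · simp [weight, subset_empty.mp (by simpa using hs)]
  set χ : ℕ → ℚ := fun i => if i ∈ s then 1 else 0
  have h0 : χ 0 = 0 := if_neg fun h => by simpa using hs h
  have hsum : ∑ k ∈ range n, 2 * (k + 1 : ℚ) * χ (k + 1) = 2 * ∑ i ∈ s, (i : ℚ) := by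
    have hshift := sum_Ico_add' (fun i : ℕ => 2 * (i : ℚ) * χ i) 0 n 1
    push_cast at hshift
    rw [← range_eq_Ico] at hshift
    have hs' : s ⊆ Ico 1 (n + 1) := fun i hi => by simpa [Nat.lt_succ_iff] using hs hi
    rw [hshift]
    simp only [χ, mul_ite, mul_one, mul_zero]
    rw [sum_ite_mem, inter_eq_right.mpr hs', mul_sum]
  have key := sum_range_mul_sub_eq χ n
  rw [sum_range_eq_add_Ico _ hn, hsum, h0] at key
  simp only [weight, χ] at key ⊢
  by_cases h1 : 1 ∈ s <;> simp [h1] at key ⊢ <;> linarith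

/-! ### Injectivity of `raise` below the middle level -/

-- Integer levels let the iterates of `lower` run below zero, where the space is trivial.
def levelSpace (n : ℕ) (m : ℤ) : Submodule ℚ (Finset ℕ → ℚ) where
  carrier := {f | ∀ s, f s ≠ 0 → s ⊆ Icc 1 n ∧ ∑ i ∈ s, (i : ℤ) = m}
  zero_mem' _ h := absurd rfl h
  add_mem' {f g} hf hg s hs := by
    by_cases hfs : f s = 0
    · exact hg s (by simpa [hfs] using hs)
    · exact hf s hfs
  smul_mem' _ _ hf s hs := hf s (right_ne_zero_of_mul hs)

section levelSpace

variable {n : ℕ} {m : ℤ} {f : Finset ℕ → ℚ}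

lemma insertOp_mem_levelSpace {a : ℕ} (ha : a ∈ Icc 1 n) (hf : f ∈ levelSpace n m) :
    insertOp a f ∈ levelSpace n (m + a) := by
  intro s hs
  have has : a ∈ s := by_contra fun h => hs (by simp [h])
  simp only [insertOp_apply, has, if_true] at hs
  obtain ⟨hsub, hsum⟩ := hf _ hs
  refine ⟨insert_erase has ▸ insert_subset ha hsub, ?_⟩
  rw [← sum_erase_add s _ has, hsum]

lemma moveOp_mem_levelSpace {a b : ℕ} (hb : b ∈ Icc 1 n) (hf : f ∈ levelSpace n m) :
    moveOp a b f ∈ levelSpace n (m + b - a) := by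
  intro s hs
  have hab : b ∈ s ∧ a ∉ s := by_contra fun h => hs (by simp [h])
  simp only [moveOp_apply, hab] at hs
  obtain ⟨hsub, hsum⟩ := hf _ hs
  have ha : a ∉ s.erase b := fun h => hab.2 (mem_of_mem_erase h)
  refine ⟨insert_erase hab.1 ▸ insert_subset hb ((subset_insert _ _).trans hsub), ?_⟩
  rw [sum_insert ha] at hsum
  rw [← sum_erase_add s _ hab.1]
  linarith

lemma eraseOp_mem_levelSpace (a : ℕ) (hf : f ∈ levelSpace n m) :
    eraseOp a f ∈ levelSpace n (m - a) := by
  intro s hs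
  have has : a ∉ s := by_contra fun h => hs (by simp [h])
  simp only [eraseOp_apply, has, not_false_eq_true, if_true] at hs
  obtain ⟨hsub, hsum⟩ := hf _ hs
  refine ⟨(subset_insert _ _).trans hsub, ?_⟩
  rw [sum_insert has] at hsum
  linarith

lemma raise_mem_levelSpace (hn : 1 ≤ n) (hf : f ∈ levelSpace n m) :
    raise n f ∈ levelSpace n (m + 1) := by
  rw [raise, LinearMap.add_apply, LinearMap.sum_apply]
  refine add_mem (by exact_mod_cast insertOp_mem_levelSpace (by simpa using hn) hf)
    (sum_mem fun k hk => ?_)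
  have hk : k + 1 ∈ Icc 1 n := by simp at hk ⊢; omega
  convert moveOp_mem_levelSpace (a := k) hk hf using 2
  push_cast
  ring

lemma lower_mem_levelSpace (hf : f ∈ levelSpace n m) : lower n f ∈ levelSpace n (m - 1) := by
  rw [lower, LinearMap.add_apply, LinearMap.sum_apply]
  refine add_mem (Submodule.smul_mem _ _ (by exact_mod_cast eraseOp_mem_levelSpace 1 hf))
    (sum_mem fun k hk => Submodule.smul_mem _ _ ?_)
  have hk : k ∈ Icc 1 n := by simp at hk ⊢; omega
  convert moveOp_mem_levelSpace (a := k + 1) hk hf using 2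
  push_cast
  ring

lemma eq_zero_of_mem_levelSpace (hm : m < 0) (hf : f ∈ levelSpace n m) : f = 0 := by
  funext s
  by_contra hs
  have hsum := (hf s hs).2
  have : 0 ≤ ∑ i ∈ s, (i : ℤ) := by positivity
  omega

lemma commutator_apply_of_mem_levelSpace (hf : f ∈ levelSpace n m) :
    (raise n * lower n - lower n * raise n) f = (2 * m - n * (n + 1) / 2 : ℚ) • f := by
  rw [raise_mul_lower_sub]
  funext s
  simp only [LinearMap.mulLeft_apply, Pi.mul_apply, Pi.smul_apply, smul_eq_mul]
  by_cases hs : f s = 0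
  · simp [hs]
  obtain ⟨hsub, hsum⟩ := hf s hs
  rw [weight_eq hsub, show ∑ i ∈ s, (i : ℚ) = m by rw [← hsum, Int.cast_sum]; simp]

lemma eq_zero_of_raise_eq_zero {K : ℕ} (hK : 4 * K < n * (n + 1)) (hf : f ∈ levelSpace n K)
    (hraise : raise n f = 0) : f = 0 := by
  have hmem : ∀ j : ℕ, (lower n ^ j) f ∈ levelSpace n (K - j) := by
    intro j
    induction j with
    | zero => simpa using hf
    | succ j ih =>
      rw [pow_succ', Module.End.mul_apply]
      convert lower_mem_levelSpace ih using 2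
      push_cast
      ring
  have hμ : (2 * K - n * (n + 1) / 2 : ℚ) < 0 := by
    have : (4 * K : ℚ) < n * (n + 1) := by exact_mod_cast hK
    linarith
  refine eq_zero_of_pow_apply_eq_zero (raise n) (lower n) hμ hraise (fun j => ?_)
    (eq_zero_of_mem_levelSpace (by omega) (hmem (K + 1)))
  rw [commutator_apply_of_mem_levelSpace (hmem j)]
  push_cast
  ring_nf

end levelSpace

lemma levelCard_le_levelCard_succ {n K : ℕ} (hK : 4 * K < n * (n + 1)) :
    levelCard n K ≤ levelCard n (K + 1) := by
  have hn : 1 ≤ n := Nat.pos_of_ne_zero (by rintro rfl; simp at hK)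
  set extend := Function.ExtendByZero.linearMap ℚ (Subtype.val : levelSet n K → Finset ℕ)
  set restrict := LinearMap.funLeft ℚ ℚ (Subtype.val : levelSet n (K + 1) → Finset ℕ)
  have hextend : ∀ g, extend g ∈ levelSpace n K := by
    intro g s hs
    by_cases h : s ∈ levelSet n K
    · obtain ⟨hsub, hsum⟩ := mem_levelSet.1 h
      exact ⟨hsub, by rw [← Nat.cast_sum, hsum]⟩
    · exact absurd (Function.extend_apply' _ _ _ (by simpa using h)) hs
  have hinj : Function.Injective (restrict ∘ₗ raise n ∘ₗ extend) := by
    rw [← LinearMap.ker_eq_bot, LinearMap.ker_eq_bot']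
    intro g hg
    have hraise : raise n (extend g) = 0 := by
      funext s
      by_cases hs : s ∈ levelSet n (K + 1)
      · exact congrFun hg ⟨s, hs⟩
      · by_contra h
        obtain ⟨hsub, hsum⟩ := raise_mem_levelSpace hn (hextend g) s h
        rw [← Nat.cast_sum] at hsum
        exact hs (mem_levelSet.2 ⟨hsub, by exact_mod_cast hsum⟩)
    funext a
    simpa [extend, Subtype.val_injective.extend_apply] using
      congrFun (eq_zero_of_raise_eq_zero hK (hextend g) hraise) a
  simpa [levelCard_eq_card_levelSet] using LinearMap.finrank_le_finrank_of_injective hinj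

lemma levelCard_le_levelCard_half (n K : ℕ) :
    levelCard n K ≤ levelCard n ((∑ i ∈ Icc 1 n, i) / 2) := by
  set N := ∑ i ∈ Icc 1 n, i
  have hN : N * 2 = n * (n + 1) := sum_Icc_id_mul_two n
  have hmono : MonotoneOn (levelCard n) (Set.Iic (N / 2)) :=
    monotoneOn_of_le_succ Set.ordConnected_Iic fun j _ _ hj => by
      simp only [Set.mem_Iic, Order.succ_eq_add_one] at hj ⊢
      exact levelCard_le_levelCard_succ (by omega)
  have hmid : N / 2 ∈ Set.Iic (N / 2) := Set.mem_Iic.2 le_rfl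
  rcases le_or_gt K (N / 2) with hK | hK
  · exact hmono hK hmid hK
  rcases le_or_gt K N with hKN | hKN
  · rw [levelCard_eq_levelCard_of_add_eq (K' := N - K) (by omega)]
    exact hmono (show N - K ≤ N / 2 by omega) hmid (by omega)
  · simp [levelCard_eq_zero_of_lt hKN]

lemma M_eq_levelCard_half (n : ℕ) : M n = levelCard n ((∑ i ∈ Icc 1 n, i) / 2) :=
  le_antisymm (ciSup_le (levelCard_le_levelCard_half n))
    (le_ciSup ⟨_, Set.forall_mem_range.2 (levelCard_le_levelCard_half n)⟩ _)

end SubsetSum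

theorem stmt14_general (n : ℕ) (hmod : n % 4 = 0 ∨ n % 4 = 3) :
    M n = S n := by
  have hN := SubsetSum.sum_Icc_id_mul_two n
  have h4 : n * (n + 1) % 4 = 0 := by
    rcases hmod with h | h <;> simp [Nat.mul_mod, Nat.add_mod, h]
  rw [SubsetSum.M_eq_levelCard_half,
    SubsetSum.S_eq_levelCard (K := (∑ i ∈ Finset.Icc 1 n, i) / 2) (by omega)]

/-- For `n ≥ 1` with `n ≡ 0` or `3 (mod 4)`, `M n = S n`. -/
theorem stmt14 (n : ℕ) (hn : 1 ≤ n) (hmod : n % 4 = 0 ∨ n % 4 = 3) :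
    M n = S n :=
  stmt14_general n hmod
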